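/- The group with presentation ⟨b, c | cbc = bcb, [b², c⁴] = 1, (b⁻²cb²)³c⁴ = 1⟩ is cyclic of order 7. -/
import Mathlib

/-- Generators: `b = of 0`, `c = of 1`. -/
def rels2 : Set (FreeGroup (Fin 2)) :=
  let b := FreeGroup.of (0 : Fin 2)
  let c := FreeGroup.of (1 : Fin 2)
  {c * b * c * (b * c * b)⁻¹,
   b ^ 2 * c ^ 4 * (b ^ 2)⁻¹ * (c ^ 4)⁻¹,
   ((b ^ 2)⁻¹ * c * b ^ 2) ^ 3 * c ^ 4}

section Aux

variable {G : Type*} [Group G] {B C : G}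

lemma aux_conjpow (a b : G) (n : ℕ) : (a⁻¹ * b * a) ^ n = a⁻¹ * b ^ n * a := by
  simpa using conj_pow (a := a⁻¹) (b := b) (i := n)

lemma aux_CB (h1 : C * B * C = B * C * B)
    (h2 : B ^ 2 * C ^ 4 = C ^ 4 * B ^ 2)
    (h3 : ((B ^ 2)⁻¹ * C * B ^ 2) ^ 3 * C ^ 4 = 1) :
    C = B ∧ B ^ 7 = 1 := by
  have hx4 : ((B ^ 2)⁻¹ * C * B ^ 2) ^ 4 = C ^ 4 := by
    calc ((B ^ 2)⁻¹ * C * B ^ 2) ^ 4 = (B ^ 2)⁻¹ * C ^ 4 * B ^ 2 := aux_conjpow _ _ 4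
      _ = (B ^ 2)⁻¹ * (C ^ 4 * B ^ 2) := by group
      _ = (B ^ 2)⁻¹ * (B ^ 2 * C ^ 4) := by rw [h2]
      _ = C ^ 4 := by group
  have hx3 : ((B ^ 2)⁻¹ * C * B ^ 2) ^ 3 = (C ^ 4)⁻¹ :=
    eq_inv_of_mul_eq_one_left (by rw [← h3])
  have hx7 : ((B ^ 2)⁻¹ * C * B ^ 2) ^ 7 = 1 := by
    calc ((B ^ 2)⁻¹ * C * B ^ 2) ^ 7
        = ((B ^ 2)⁻¹ * C * B ^ 2) ^ 4 * ((B ^ 2)⁻¹ * C * B ^ 2) ^ 3 := by group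
      _ = C ^ 4 * (C ^ 4)⁻¹ := by rw [hx4, hx3]
      _ = 1 := by group
  -- braid consequence
  have hb : B⁻¹ * C * B = C * B * C⁻¹ := by
    calc B⁻¹ * C * B = B⁻¹ * (C * B * C) * C⁻¹ := by group
      _ = B⁻¹ * (B * C * B) * C⁻¹ := by rw [h1]
      _ = C * B * C⁻¹ := by group
  -- x is conjugate to B
  have hxb : (B ^ 2)⁻¹ * C * B ^ 2 = (C⁻¹ * B)⁻¹ * B * (C⁻¹ * B) := by
    calc (B ^ 2)⁻¹ * C * B ^ 2 = B⁻¹ * (B⁻¹ * C * B) * B := by simp [mul_assoc, pow_two]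
      _ = B⁻¹ * (C * B * C⁻¹) * B := by rw [hb]
      _ = (C⁻¹ * B)⁻¹ * B * (C⁻¹ * B) := by group
  have hB7 : B ^ 7 = 1 := by
    have h7 : (C⁻¹ * B)⁻¹ * B ^ 7 * (C⁻¹ * B) = 1 := by
      calc (C⁻¹ * B)⁻¹ * B ^ 7 * (C⁻¹ * B)
          = ((C⁻¹ * B)⁻¹ * B * (C⁻¹ * B)) ^ 7 := (aux_conjpow _ _ 7).symm
        _ = ((B ^ 2)⁻¹ * C * B ^ 2) ^ 7 := by rw [← hxb]
        _ = 1 := hx7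
    calc B ^ 7 = (C⁻¹ * B) * ((C⁻¹ * B)⁻¹ * B ^ 7 * (C⁻¹ * B)) * (C⁻¹ * B)⁻¹ := by group
      _ = (C⁻¹ * B) * 1 * (C⁻¹ * B)⁻¹ := by rw [h7]
      _ = 1 := by group
  -- C is conjugate to B
  have hc : (C⁻¹ * B⁻¹)⁻¹ * B * (C⁻¹ * B⁻¹) = C := by
    calc (C⁻¹ * B⁻¹)⁻¹ * B * (C⁻¹ * B⁻¹) = (B * C * B) * C⁻¹ * B⁻¹ := by group
      _ = (C * B * C) * C⁻¹ * B⁻¹ := by rw [← h1]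
      _ = C := by group
  have hC7 : C ^ 7 = 1 := by
    calc C ^ 7 = ((C⁻¹ * B⁻¹)⁻¹ * B * (C⁻¹ * B⁻¹)) ^ 7 := by rw [hc]
      _ = (C⁻¹ * B⁻¹)⁻¹ * B ^ 7 * (C⁻¹ * B⁻¹) := aux_conjpow _ _ 7
      _ = (C⁻¹ * B⁻¹)⁻¹ * 1 * (C⁻¹ * B⁻¹) := by rw [hB7]
      _ = 1 := by group
  -- C = x, hence B^2 commutes with C
  have hCx : C = (B ^ 2)⁻¹ * C * B ^ 2 := by
    calc C = (C ^ 4) ^ 2 * (C ^ 7)⁻¹ := by group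
      _ = (((B ^ 2)⁻¹ * C * B ^ 2) ^ 4) ^ 2 * (1 : G)⁻¹ := by rw [hx4, hC7]
      _ = ((B ^ 2)⁻¹ * C * B ^ 2) * ((B ^ 2)⁻¹ * C * B ^ 2) ^ 7 := by group
      _ = ((B ^ 2)⁻¹ * C * B ^ 2) * 1 := by rw [hx7]
      _ = (B ^ 2)⁻¹ * C * B ^ 2 := by group
  have hB2C : B ^ 2 * C = C * B ^ 2 := by
    calc B ^ 2 * C = B ^ 2 * ((B ^ 2)⁻¹ * C * B ^ 2) := by rw [← hCx]
      _ = C * B ^ 2 := by group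
  -- B commutes with C
  have hBC : B * C = C * B := by
    have hcomm : (B ^ 2) ^ 4 * C = C * (B ^ 2) ^ 4 :=
      ((show Commute (B ^ 2) C from hB2C).pow_left 4).eq
    calc B * C = (B ^ 7)⁻¹ * ((B ^ 2) ^ 4 * C) := by group
      _ = (B ^ 7)⁻¹ * (C * (B ^ 2) ^ 4) := by rw [hcomm]
      _ = (B ^ 7)⁻¹ * C * B ^ 7 * B := by group
      _ = (1 : G)⁻¹ * C * 1 * B := by rw [hB7]
      _ = C * B := by group
  have hCB : C = B := by
    have e1 : C * (C * B) = B * (C * B) := by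
      calc C * (C * B) = C * (B * C) := by rw [hBC]
        _ = B * C * B := by rw [← mul_assoc]; exact h1
        _ = B * (C * B) := by group
    exact mul_right_cancel e1
  exact ⟨hCB, hB7⟩

end Aux


/-- The group `⟨b, c | cbc = bcb, [b², c⁴] = 1, (b⁻²cb²)³c⁴ = 1⟩` is cyclic of order 7. -/
theorem stmt_2 : IsCyclic (PresentedGroup rels2) ∧ Nat.card (PresentedGroup rels2) = 7 := by
  have key : ∀ r ∈ rels2, PresentedGroup.mk rels2 r = 1 := fun r hr =>
    (QuotientGroup.eq_one_iff r).2 (Subgroup.subset_normalClosure hr)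
  set B : PresentedGroup rels2 := PresentedGroup.of 0 with hBdef
  set C : PresentedGroup rels2 := PresentedGroup.of 1 with hCdef
  have hmkB : PresentedGroup.mk rels2 (FreeGroup.of 0) = B := rfl
  have hmkC : PresentedGroup.mk rels2 (FreeGroup.of 1) = C := rfl
  have k1 : C * B * C * (B * C * B)⁻¹ = 1 := by
    have h := key _ (show _ ∈ rels2 from Set.mem_insert _ _)
    simp only [map_mul, map_inv, map_pow, hmkB, hmkC] at h
    exact h
  have k2 : B ^ 2 * C ^ 4 * (B ^ 2)⁻¹ * (C ^ 4)⁻¹ = 1 := by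
    have h := key _ (show _ ∈ rels2 from Set.mem_insert_of_mem _ (Set.mem_insert _ _))
    simp only [map_mul, map_inv, map_pow, hmkB, hmkC] at h
    exact h
  have k3 : ((B ^ 2)⁻¹ * C * B ^ 2) ^ 3 * C ^ 4 = 1 := by
    have h := key _ (show _ ∈ rels2 from
      Set.mem_insert_of_mem _ (Set.mem_insert_of_mem _ rfl))
    simp only [map_mul, map_inv, map_pow, hmkB, hmkC] at h
    exact h
  have h1 : C * B * C = B * C * B := by
    calc C * B * C = (C * B * C * (B * C * B)⁻¹) * (B * C * B) := by group
      _ = 1 * (B * C * B) := by rw [k1]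
      _ = B * C * B := one_mul _
  have h2 : B ^ 2 * C ^ 4 = C ^ 4 * B ^ 2 := by
    calc B ^ 2 * C ^ 4 = (B ^ 2 * C ^ 4 * (B ^ 2)⁻¹ * (C ^ 4)⁻¹) * (C ^ 4 * B ^ 2) := by group
      _ = 1 * (C ^ 4 * B ^ 2) := by rw [k2]
      _ = C ^ 4 * B ^ 2 := one_mul _
  obtain ⟨hCB, hB7⟩ := aux_CB h1 h2 k3
  -- B generates
  have hgen : ∀ x : PresentedGroup rels2, x ∈ Subgroup.zpowers B := by
    intro x
    refine PresentedGroup.generated_by rels2 _ (fun j => ?_) x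
    fin_cases j
    · exact Subgroup.mem_zpowers B
    · exact hCB ▸ Subgroup.mem_zpowers B
  have hcyc : IsCyclic (PresentedGroup rels2) := ⟨B, hgen⟩
  -- the surjection to ZMod 7
  have hrel : ∀ r ∈ rels2,
      FreeGroup.lift (fun _ : Fin 2 => Multiplicative.ofAdd (1 : ZMod 7)) r = 1 := by
    intro r hr
    simp only [rels2, Set.mem_insert_iff, Set.mem_singleton_iff] at hr
    rcases hr with rfl | rfl | rfl <;>
      simp only [map_mul, map_inv, map_pow, FreeGroup.lift_apply_of] <;> decide
  have h7dvd : (7 : ℕ) ∣ orderOf B := by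
    have := orderOf_map_dvd (PresentedGroup.toGroup hrel) B
    rw [PresentedGroup.toGroup.of hrel] at this
    rwa [orderOf_ofAdd_eq_addOrderOf, ZMod.addOrderOf_one] at this
  have hdvd7 : orderOf B ∣ 7 := orderOf_dvd_of_pow_eq_one hB7
  have hord : orderOf B = 7 := Nat.dvd_antisymm hdvd7 h7dvd
  refine ⟨hcyc, ?_⟩
  have htop : Subgroup.zpowers B = ⊤ := by
    ext x; simp [hgen x]
  calc Nat.card (PresentedGroup rels2)
      = Nat.card (⊤ : Subgroup (PresentedGroup rels2)) :=
        (Nat.card_congr Subgroup.topEquiv.toEquiv).symm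
    _ = Nat.card (Subgroup.zpowers B) := by rw [htop]
    _ = orderOf B := Nat.card_zpowers B
    _ = 7 := hord
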